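/- arXiv:2210.15966 — 3 statements merged into one kernel-verified Lean document; each statement's English description precedes it below -/
import Mathlib

section
/- For all integers n ≥ d ≥ 0 and all real x, the sum over 0 ≤ r ≤ d of (-1)^r * C(d,r) * (x-r)^n equals d! times the sum over all strictly increasing sequences 1 ≤ j_1 < j_2 < ... < j_d ≤ n of x^(n-j_d) * ∏_{r=0}^{d-1} (x-(d-r))^(j_{r+1}-j_r-1), where j_0 = 0. -/
open scoped Classical

/-- Strictly increasing sequences `0 = j 0 < j 1 < ... < j d ≤ n`
(i.e. `1 ≤ j_1 < ... < j_d ≤ n` with the convention `j_0 = 0`). -/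
noncomputable def incSeqs (d n : ℕ) : Finset (Fin (d + 1) → ℕ) :=
  (Fintype.piFinset fun _ => Finset.range (n + 1)).filter
    (fun j => j 0 = 0 ∧ StrictMono j ∧ j (Fin.last d) ≤ n)

/-!
Both sides satisfy the same recursion in `(d, n)`. Write `L d n x` for the left side and
`S d n x` for the sum over `incSeqs d n`. Since `(x - r) ^ (n + 1) = x * (x - r) ^ n - r * (x - r) ^ n`
and `r * C(d + 1, r) = (d + 1) * C(d, r - 1)`,
`L (d + 1) (n + 1) x = x * L (d + 1) n x + (d + 1) * L d n (x - 1)`.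
Splitting the sequences according to whether `j_{d+1} ≤ n` or `j_{d+1} = n + 1`, and dropping the
last entry in the second case, gives `S (d + 1) (n + 1) x = x * S (d + 1) n x + S d n (x - 1)`.
Together with `L 0 n x = S 0 n x = x ^ n` and `L (d + 1) 0 x = S (d + 1) 0 x = 0`, induction
gives `L d n x = d! * S d n x`.
-/

open Finset Nat

noncomputable def altChooseSum (d n : ℕ) (x : ℝ) : ℝ :=
  ∑ r ∈ range (d + 1), (-1 : ℝ) ^ r * d.choose r * (x - r) ^ n

noncomputable def incSeqWeight (d n : ℕ) (x : ℝ) (j : Fin (d + 1) → ℕ) : ℝ :=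
  x ^ (n - j (Fin.last d)) * ∏ r : Fin d, (x - ((d : ℝ) - (r : ℕ))) ^ (j r.succ - j r.castSucc - 1)

noncomputable def incSeqsSum (d n : ℕ) (x : ℝ) : ℝ :=
  ∑ j ∈ incSeqs d n, incSeqWeight d n x j

theorem altChooseSum_zero_left (n : ℕ) (x : ℝ) : altChooseSum 0 n x = x ^ n := by
  simp [altChooseSum]

theorem altChooseSum_succ_zero (d : ℕ) (x : ℝ) : altChooseSum (d + 1) 0 x = 0 := by
  simpa [altChooseSum] using
    congrArg (Int.cast : ℤ → ℝ) (Int.alternating_sum_range_choose_of_ne d.succ_ne_zero)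

theorem altChooseSum_succ_succ (d n : ℕ) (x : ℝ) :
    altChooseSum (d + 1) (n + 1) x =
      x * altChooseSum (d + 1) n x + (d + 1) * altChooseSum d n (x - 1) := by
  have hshift : ∑ r ∈ range (d + 2), (-1 : ℝ) ^ r * (d + 1).choose r * r * (x - r) ^ n =
      -((d + 1) * altChooseSum d n (x - 1)) := by
    rw [sum_range_succ', altChooseSum, mul_sum, ← sum_neg_distrib]
    simp only [Nat.cast_zero, mul_zero, zero_mul, add_zero]
    refine sum_congr rfl fun s _ => ?_
    have h : ((d + 1 : ℕ) * d.choose s : ℝ) = (d + 1).choose (s + 1) * (s + 1 : ℕ) := by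
      exact_mod_cast Nat.add_one_mul_choose_eq d s
    push_cast at h ⊢
    linear_combination (-1 : ℝ) ^ s * (x - 1 - s) ^ n * h
  calc altChooseSum (d + 1) (n + 1) x
      = x * altChooseSum (d + 1) n x -
          ∑ r ∈ range (d + 2), (-1 : ℝ) ^ r * (d + 1).choose r * r * (x - r) ^ n := by
        rw [altChooseSum, altChooseSum, mul_sum, ← sum_sub_distrib]
        exact sum_congr rfl fun r _ => by ring
    _ = _ := by rw [hshift]; ring

theorem mem_incSeqs {d n : ℕ} {j : Fin (d + 1) → ℕ} :
    j ∈ incSeqs d n ↔ j 0 = 0 ∧ StrictMono j ∧ j (Fin.last d) ≤ n := by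
  simp only [incSeqs, mem_filter, Fintype.mem_piFinset, mem_range, and_iff_right_iff_imp]
  exact fun ⟨_, hj, hn⟩ i => Nat.lt_succ_of_le ((hj.monotone (Fin.le_last i)).trans hn)

theorem incSeqs_zero_left (n : ℕ) : incSeqs 0 n = {0} := by
  ext j
  rw [mem_incSeqs, mem_singleton]
  refine ⟨fun ⟨h0, _, _⟩ => funext fun i => by rwa [Fin.fin_one_eq_zero i], ?_⟩
  rintro rfl
  exact ⟨rfl, fun a b h => absurd h (by simp [Fin.fin_one_eq_zero]), Nat.zero_le n⟩

theorem incSeqs_succ_zero (d : ℕ) : incSeqs (d + 1) 0 = ∅ := by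
  ext j
  simp only [mem_incSeqs, notMem_empty, iff_false]
  rintro ⟨h0, hj, hn⟩
  have := hj (Fin.last_pos (n := d))
  omega

theorem filter_incSeqs_last_le (d n : ℕ) :
    (incSeqs d (n + 1)).filter (fun j => j (Fin.last d) ≤ n) = incSeqs d n := by
  ext j
  simp only [mem_filter, mem_incSeqs]
  constructor
  · exact fun ⟨⟨h0, hj, _⟩, hn⟩ => ⟨h0, hj, hn⟩
  · exact fun ⟨h0, hj, hn⟩ => ⟨⟨h0, hj, hn.trans n.le_succ⟩, hn⟩

theorem filter_incSeqs_last_gt (d n : ℕ) :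
    (incSeqs (d + 1) (n + 1)).filter (fun j => ¬ j (Fin.last (d + 1)) ≤ n) =
      (incSeqs d n).image (fun j => Fin.snoc j (n + 1)) := by
  ext j
  simp only [mem_filter, mem_image, mem_incSeqs]
  constructor
  · rintro ⟨⟨h0, hj, hn⟩, hlast⟩
    have hlast : j (Fin.last (d + 1)) = n + 1 := by omega
    refine ⟨Fin.init j, ⟨h0, hj.comp Fin.strictMono_castSucc, ?_⟩, ?_⟩
    · have := hj (Fin.castSucc_lt_last (Fin.last d))
      simp only [Fin.init]
      omega
    · rw [← hlast, Fin.snoc_init_self]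
  · rintro ⟨i, ⟨h0, hi, hn⟩, rfl⟩
    refine ⟨⟨?_, ?_, ?_⟩, ?_⟩
    · rw [← Fin.castSucc_zero, Fin.snoc_castSucc, h0]
    · simpa [Fin.insertNth_last'] using Fin.strictMono_insertNth_last hi (n + 1) (by omega)
    · simp
    · simp

theorem incSeqWeight_succ {d n : ℕ} (x : ℝ) {j : Fin (d + 1) → ℕ} (hj : j (Fin.last d) ≤ n) :
    incSeqWeight d (n + 1) x j = x * incSeqWeight d n x j := by
  rw [incSeqWeight, incSeqWeight, Nat.sub_add_comm hj, pow_succ]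
  ring

theorem incSeqWeight_snoc (d n : ℕ) (x : ℝ) (j : Fin (d + 1) → ℕ) :
    incSeqWeight (d + 1) (n + 1) x (Fin.snoc j (n + 1)) = incSeqWeight d n (x - 1) j := by
  simp only [incSeqWeight, Fin.snoc_last, Nat.sub_self, pow_zero, one_mul, Fin.prod_univ_castSucc,
    Fin.succ_castSucc, Fin.snoc_castSucc, Fin.succ_last, Fin.val_last, Fin.val_castSucc]
  rw [mul_comm, show n + 1 - j (Fin.last d) - 1 = n - j (Fin.last d) by omega]
  push_cast
  congr 1
  · ring_nf
  · exact prod_congr rfl fun r _ => by ring_nf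

theorem incSeqsSum_zero_left (n : ℕ) (x : ℝ) : incSeqsSum 0 n x = x ^ n := by
  simp [incSeqsSum, incSeqWeight, incSeqs_zero_left]

theorem incSeqsSum_succ_zero (d : ℕ) (x : ℝ) : incSeqsSum (d + 1) 0 x = 0 := by
  rw [incSeqsSum, incSeqs_succ_zero, sum_empty]

theorem incSeqsSum_succ_succ (d n : ℕ) (x : ℝ) :
    incSeqsSum (d + 1) (n + 1) x = x * incSeqsSum (d + 1) n x + incSeqsSum d n (x - 1) := by
  have hsnoc : Set.InjOn (fun j : Fin (d + 1) → ℕ => (Fin.snoc j (n + 1) : Fin (d + 2) → ℕ))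
      (incSeqs d n) := fun i _ j _ hij => by simpa using congrArg Fin.init hij
  rw [incSeqsSum, ← sum_filter_add_sum_filter_not _ (fun j => j (Fin.last (d + 1)) ≤ n),
    filter_incSeqs_last_le, filter_incSeqs_last_gt, sum_image hsnoc, incSeqsSum, mul_sum]
  congr 1
  · exact sum_congr rfl fun j hj => incSeqWeight_succ x (mem_incSeqs.mp hj).2.2
  · exact sum_congr rfl fun j _ => incSeqWeight_snoc d n x j

theorem altChooseSum_eq_factorial_mul_incSeqsSum (d n : ℕ) (x : ℝ) :
    altChooseSum d n x = d ! * incSeqsSum d n x := by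
  induction n generalizing d x with
  | zero =>
    cases d with
    | zero => simp [altChooseSum_zero_left, incSeqsSum_zero_left]
    | succ d => rw [altChooseSum_succ_zero, incSeqsSum_succ_zero, mul_zero]
  | succ n ih =>
    cases d with
    | zero => simp [altChooseSum_zero_left, incSeqsSum_zero_left]
    | succ d =>
      rw [altChooseSum_succ_succ, incSeqsSum_succ_succ, ih, ih, Nat.factorial_succ]
      push_cast
      ring

theorem stmt0_general (d n : ℕ) (x : ℝ) :
    ∑ r ∈ Finset.range (d + 1), (-1 : ℝ) ^ r * (d.choose r) * (x - r) ^ n =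
      (d.factorial : ℝ) * ∑ j ∈ incSeqs d n,
        x ^ (n - j (Fin.last d)) *
          ∏ r : Fin d, (x - ((d : ℝ) - (r : ℕ))) ^ (j r.succ - j r.castSucc - 1) :=
  altChooseSum_eq_factorial_mul_incSeqsSum d n x

theorem stmt0 (d n : ℕ) (hdn : d ≤ n) (x : ℝ) :
    ∑ r ∈ Finset.range (d + 1), (-1 : ℝ) ^ r * (d.choose r) * (x - r) ^ n =
      (d.factorial : ℝ) * ∑ j ∈ incSeqs d n,
        x ^ (n - j (Fin.last d)) *
          ∏ r : Fin d, (x - ((d : ℝ) - (r : ℕ))) ^ (j r.succ - j r.castSucc - 1) :=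
  stmt0_general d n x
end

section
/- For integers n ≥ d ≥ 0, evaluating f_{d,n} at 0 gives f_{d,n}(0) = (-1)^(n-d) ∑_{1 ≤ j_1 < ... < j_{d-1} < n} 1 · 2^(j_{d-1}-j_{d-2}) · 3^(j_{d-2}-j_{d-3}) ··· d^(j_1), where f_{d,n}(x) = d! ∑_{1 ≤ j_1 < ... < j_d ≤ n} x^(n-j_d) ∏_{r=0}^{d-1} (x-(d-r))^(j_{r+1}-j_r-1) with j_0 = 0. -/
/-!
At `x = 0` only the sequences with `j_d = n` survive, and the `r`-th factor becomes
`(-(d - r)) ^ (g_r - 1)` with gap `g_r = j_{r+1} - j_r ≥ 1`. The gaps telescope to `n`, so the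
signs multiply to `(-1) ^ (n - d)`, while `d! = ∏ r, (d - r)` supplies the missing power in each
factor, turning `(d - r) ^ (g_r - 1)` into `(d - r) ^ g_r`.
-/

open scoped Classical

/-- `f_{d,n}(x)`. -/
noncomputable def f (d n : ℕ) (x : ℝ) : ℝ :=
  (d.factorial : ℝ) * ∑ j ∈ incSeqs d n,
    x ^ (n - j (Fin.last d)) *
      ∏ r : Fin d, (x - ((d : ℝ) - (r : ℕ))) ^ (j r.succ - j r.castSucc - 1)

/-- Sequences `0 = j 0 < j 1 < ... < j d = n`. -/
noncomputable def fullSeqs (d n : ℕ) : Finset (Fin (d + 1) → ℕ) :=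
  (Fintype.piFinset fun _ => Finset.range (n + 1)).filter
    (fun j => j 0 = 0 ∧ StrictMono j ∧ j (Fin.last d) = n)

open Finset Nat

lemma prod_fin_sub_eq_factorial (d : ℕ) : ∏ r : Fin d, (d - (r : ℕ)) = d ! := by
  rw [Fin.prod_univ_eq_prod_range (fun r => d - r), ← descFactorial_eq_prod_range,
    descFactorial_self]

lemma sum_succ_sub_castSucc_of_monotone {d : ℕ} {j : Fin (d + 1) → ℕ} (hj : Monotone j) :
    ∑ r : Fin d, (j r.succ - j r.castSucc) = j (Fin.last d) - j 0 := by
  induction d with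
  | zero => simp
  | succ d ih =>
    have hinit := ih (hj.comp Fin.strictMono_castSucc.monotone)
    simp only [Function.comp_apply, Fin.castSucc_zero] at hinit
    rw [Fin.sum_univ_castSucc]
    simp only [Fin.succ_castSucc, hinit, Fin.succ_last, Nat.succ_eq_add_one]
    have := hj (Fin.zero_le (Fin.last d).castSucc)
    have := hj (Fin.le_last (Fin.last d).castSucc)
    omega

lemma sum_gap_sub_one_eq {d n : ℕ} {j : Fin (d + 1) → ℕ} (hj : j ∈ fullSeqs d n) :
    ∑ r : Fin d, (j r.succ - j r.castSucc - 1) = n - d := by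
  obtain ⟨-, h0, hmono, hlast⟩ := mem_filter.mp hj
  have hgap : ∀ r : Fin d, 1 ≤ j r.succ - j r.castSucc := fun r =>
    Nat.sub_pos_of_lt (hmono r.castSucc_lt_succ)
  rw [sum_tsub_distrib _ fun r _ => hgap r, sum_succ_sub_castSucc_of_monotone hmono.monotone,
    h0, hlast]
  simp

lemma fullSeqs_subset_incSeqs (d n : ℕ) : fullSeqs d n ⊆ incSeqs d n := fun _ hj => by
  simp only [fullSeqs, incSeqs, mem_filter] at hj ⊢
  exact ⟨hj.1, hj.2.1, hj.2.2.1, hj.2.2.2.le⟩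

lemma f_zero_eq_sum_fullSeqs (d n : ℕ) :
    f d n 0 = (d ! : ℝ) * ∑ j ∈ fullSeqs d n,
      ∏ r : Fin d, (-((d - (r : ℕ) : ℕ) : ℝ)) ^ (j r.succ - j r.castSucc - 1) := by
  have hfactor : ∀ r : Fin d, (0 : ℝ) - ((d : ℝ) - (r : ℕ)) = -((d - (r : ℕ) : ℕ) : ℝ) := fun r => by
    rw [cast_sub r.is_lt.le, zero_sub]
  unfold f
  simp only [hfactor]
  congr 1
  refine (sum_subset (fullSeqs_subset_incSeqs d n) fun j hj hnj => ?_).symm.trans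
    (sum_congr rfl fun j hj => ?_)
  · obtain ⟨hrange, h0, hmono, hle⟩ := mem_filter.mp hj
    have hlt : j (Fin.last d) < n :=
      hle.lt_of_ne fun heq => hnj (mem_filter.mpr ⟨hrange, h0, hmono, heq⟩)
    rw [zero_pow (Nat.sub_ne_zero_of_lt hlt), zero_mul]
  · rw [(mem_filter.mp hj).2.2.2, Nat.sub_self, pow_zero, one_mul]

lemma factorial_mul_prod_neg_pow {d n : ℕ} {j : Fin (d + 1) → ℕ} (hj : j ∈ fullSeqs d n) :
    (d ! : ℝ) * ∏ r : Fin d, (-((d - (r : ℕ) : ℕ) : ℝ)) ^ (j r.succ - j r.castSucc - 1) =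
      (-1) ^ (n - d) * ∏ r : Fin d, ((d - (r : ℕ) : ℕ) : ℝ) ^ (j r.succ - j r.castSucc) := by
  have hgap : ∀ r : Fin d, j r.succ - j r.castSucc ≠ 0 := fun r =>
    Nat.sub_ne_zero_of_lt ((mem_filter.mp hj).2.2.1 r.castSucc_lt_succ)
  rw [prod_congr rfl fun r _ => neg_pow _ _, prod_mul_distrib, prod_pow_eq_pow_sum,
    sum_gap_sub_one_eq hj, ← prod_fin_sub_eq_factorial, cast_prod, mul_left_comm, ← prod_mul_distrib]
  congr 2 with r
  exact mul_pow_sub_one (hgap r) _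

theorem stmt11_general (d n : ℕ) :
    f d n 0 = (-1 : ℝ) ^ (n - d) *
      ∑ j ∈ fullSeqs d n,
        ∏ r : Fin d, (((d : ℕ) - (r : ℕ) : ℕ) : ℝ) ^ (j r.succ - j r.castSucc) := by
  rw [f_zero_eq_sum_fullSeqs, mul_sum, mul_sum]
  exact sum_congr rfl fun j hj => factorial_mul_prod_neg_pow hj

theorem stmt11 (d n : ℕ) (hdn : d ≤ n) :
    f d n 0 = (-1 : ℝ) ^ (n - d) *
      ∑ j ∈ fullSeqs d n,
        ∏ r : Fin d, (((d : ℕ) - (r : ℕ) : ℕ) : ℝ) ^ (j r.succ - j r.castSucc) :=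
  stmt11_general d n
end

section
/- For positive integers n and d, ∑_{r=1}^{d} C(d,r) (-1)^(r-1) / r^n = ∑_{1 ≤ j_1 ≤ j_2 ≤ ... ≤ j_n ≤ d} 1/(j_1 j_2 ··· j_n). -/
open scoped Classical

/-- Weakly increasing sequences `1 ≤ j 0 ≤ j 1 ≤ ... ≤ j (k-1) ≤ m`. -/
noncomputable def weakSeqs (k m : ℕ) : Finset (Fin k → ℕ) :=
  (Fintype.piFinset fun _ => Finset.Icc 1 m).filter Monotone

/-!
Both sides satisfy `s (n + 1) d = ∑ m ∈ Icc 1 d, s n m / m` with `s 0 d = 1`. For the right-hand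
side this is splitting off the largest index `j_n = m`. For the left-hand side, exchanging the two
sums reduces it to `∑ m ∈ Icc 1 d, C(m, r) / m = C(d, r) / r`, which follows from Pascal's rule and
`m * C(m - 1, r - 1) = r * C(m, r)`; at `n = 0` it is the vanishing of the alternating sum of a row
of binomial coefficients.
-/

open Finset

lemma sum_Icc_choose_div_self {r : ℕ} (hr : r ≠ 0) (d : ℕ) :
    ∑ m ∈ Icc 1 d, (m.choose r : ℝ) / m = d.choose r / r := by
  obtain ⟨s, rfl⟩ : ∃ s, r = s + 1 := ⟨r - 1, by omega⟩
  induction d with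
  | zero => simp
  | succ d ih =>
    have pascal : ((d + 1).choose (s + 1) : ℝ) = d.choose s + d.choose (s + 1) := by
      exact_mod_cast Nat.choose_succ_succ' d s
    have absorb : ((d + 1).choose (s + 1) : ℝ) / (d + 1 : ℕ) = d.choose s / (s + 1 : ℕ) := by
      rw [div_eq_div_iff (by positivity) (by positivity)]
      exact_mod_cast (Nat.add_one_mul_choose_eq d s).symm.trans (mul_comm _ _)
    rw [sum_Icc_succ_top (by omega), ih, absorb, ← add_div, pascal, add_comm]

lemma sum_Icc_sum_choose_mul_div (a : ℕ → ℝ) (d : ℕ) :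
    ∑ m ∈ Icc 1 d, (∑ r ∈ Icc 1 m, m.choose r * a r) / m =
      ∑ r ∈ Icc 1 d, d.choose r * (a r / r) := by
  have extend : ∀ m ∈ Icc 1 d,
      ∑ r ∈ Icc 1 m, (m.choose r : ℝ) * a r = ∑ r ∈ Icc 1 d, m.choose r * a r := by
    intro m hm
    refine sum_subset (Icc_subset_Icc_right (mem_Icc.1 hm).2) fun r _ hr => ?_
    rw [Nat.choose_eq_zero_of_lt (by simp_all), Nat.cast_zero, zero_mul]
  calc ∑ m ∈ Icc 1 d, (∑ r ∈ Icc 1 m, m.choose r * a r) / m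
      = ∑ r ∈ Icc 1 d, (∑ m ∈ Icc 1 d, (m.choose r : ℝ) / m) * a r := by
        rw [sum_congr rfl fun m hm => by rw [extend m hm]]
        simp only [sum_div, sum_mul]
        rw [sum_comm]
        exact sum_congr rfl fun r _ => sum_congr rfl fun m _ => (div_mul_eq_mul_div _ _ _).symm
    _ = ∑ r ∈ Icc 1 d, d.choose r * (a r / r) := by
        refine sum_congr rfl fun r hr => ?_
        rw [sum_Icc_choose_div_self (by simp_all; omega)]
        ring

lemma sum_Icc_choose_mul_neg_one_pow_pred {d : ℕ} (hd : d ≠ 0) :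
    ∑ r ∈ Icc 1 d, (d.choose r : ℝ) * (-1) ^ (r - 1) = 1 := by
  have h := Int.alternating_sum_range_choose_of_ne hd
  rw [range_eq_Ico, sum_eq_sum_Ico_succ_bot (by omega), Ico_add_one_right_eq_Icc] at h
  calc ∑ r ∈ Icc 1 d, (d.choose r : ℝ) * (-1) ^ (r - 1)
      = -((∑ r ∈ Icc 1 d, (-1) ^ r * d.choose r : ℤ) : ℝ) := by
        push_cast
        rw [← sum_neg_distrib]
        refine sum_congr rfl fun r hr => ?_
        obtain ⟨s, rfl⟩ : ∃ s, r = s + 1 := ⟨r - 1, by simp at hr; omega⟩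
        simp only [pow_succ, add_tsub_cancel_right]
        ring
    _ = 1 := by
        rw [eq_neg_of_add_eq_zero_right h]
        simp

lemma Fin.monotone_snoc_iff {α : Type*} [Preorder α] {n : ℕ} {p : Fin n → α} {a : α} :
    Monotone (Fin.snoc p a : Fin (n + 1) → α) ↔ Monotone p ∧ ∀ i, p i ≤ a := by
  refine ⟨fun h => ⟨fun i j hij => ?_, fun i => ?_⟩, fun ⟨hp, ha⟩ i j hij => ?_⟩
  · simpa using h (Fin.castSucc_le_castSucc_iff.2 hij)
  · simpa using h (Fin.le_last i.castSucc)
  · induction j using Fin.lastCases with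
    | last => induction i using Fin.lastCases <;> simp [ha]
    | cast j =>
      induction i using Fin.lastCases with
      | last => exact absurd hij (Fin.castSucc_lt_last j).not_ge
      | cast i => simpa using hp (Fin.castSucc_le_castSucc_iff.1 hij)

lemma weakSeqs_zero (d : ℕ) : weakSeqs 0 d = {![]} :=
  eq_singleton_iff_unique_mem.2
    ⟨mem_filter.2 ⟨Fintype.mem_piFinset.2 finZeroElim, fun i => i.elim0⟩,
      fun _ _ => Subsingleton.elim _ _⟩

lemma snoc_mem_weakSeqs_iff {n d m : ℕ} {p : Fin n → ℕ} :
    (Fin.snoc p m : Fin (n + 1) → ℕ) ∈ weakSeqs (n + 1) d ↔ m ∈ Icc 1 d ∧ p ∈ weakSeqs n m := by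
  simp only [weakSeqs, mem_filter, Fintype.mem_piFinset, mem_Icc, Fin.forall_iff_castSucc,
    Fin.snoc_castSucc, Fin.snoc_last, Fin.monotone_snoc_iff]
  grind

lemma sum_weakSeqs_succ {M : Type*} [AddCommMonoid M] (n d : ℕ) (F : (Fin (n + 1) → ℕ) → M) :
    ∑ j ∈ weakSeqs (n + 1) d, F j = ∑ m ∈ Icc 1 d, ∑ p ∈ weakSeqs n m, F (Fin.snoc p m) := by
  rw [sum_sigma']
  refine sum_nbij' (fun j => ⟨j (Fin.last n), Fin.init j⟩) (fun q => Fin.snoc q.2 q.1)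
    (fun j hj => ?_) (fun q hq => ?_) (fun j _ => Fin.snoc_init_self j) (fun q _ => ?_)
    (fun j _ => by simp)
  · rw [← Fin.snoc_init_self j, snoc_mem_weakSeqs_iff] at hj
    simpa using hj
  · simpa [snoc_mem_weakSeqs_iff] using hq
  · simp

theorem stmt13_general (n d : ℕ) (hd : 1 ≤ d) :
    ∑ r ∈ Finset.Icc 1 d, (d.choose r : ℝ) * (-1 : ℝ) ^ (r - 1) / (r : ℝ) ^ n =
      ∑ j ∈ weakSeqs n d, 1 / ∏ i, (j i : ℝ) := by
  induction n generalizing d with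
  | zero =>
    simp [sum_Icc_choose_mul_neg_one_pow_pred (by omega : d ≠ 0), weakSeqs_zero]
  | succ n ih =>
    calc ∑ r ∈ Icc 1 d, (d.choose r : ℝ) * (-1) ^ (r - 1) / (r : ℝ) ^ (n + 1)
        = ∑ r ∈ Icc 1 d, d.choose r * ((-1) ^ (r - 1) / (r : ℝ) ^ n / r) := by
          simp only [pow_succ, mul_div_assoc, div_div]
      _ = ∑ m ∈ Icc 1 d, (∑ r ∈ Icc 1 m, m.choose r * ((-1) ^ (r - 1) / (r : ℝ) ^ n)) / m :=
          (sum_Icc_sum_choose_mul_div _ d).symm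
      _ = ∑ m ∈ Icc 1 d, (∑ j ∈ weakSeqs n m, 1 / ∏ i, (j i : ℝ)) / m := by
          refine sum_congr rfl fun m hm => ?_
          simp only [← ih m (mem_Icc.1 hm).1, mul_div_assoc]
      _ = ∑ j ∈ weakSeqs (n + 1) d, 1 / ∏ i, (j i : ℝ) := by
          simp only [sum_weakSeqs_succ, Fin.prod_univ_castSucc, Fin.snoc_castSucc, Fin.snoc_last,
            sum_div, div_div]

theorem stmt13 (n d : ℕ) (hn : 1 ≤ n) (hd : 1 ≤ d) :
    ∑ r ∈ Finset.Icc 1 d, (d.choose r : ℝ) * (-1 : ℝ) ^ (r - 1) / (r : ℝ) ^ n =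
      ∑ j ∈ weakSeqs n d, 1 / ∏ i, (j i : ℝ) :=
  stmt13_general n d hd
end
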